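/- arXiv:0907.3511 — 4 statements merged into one kernel-verified Lean document; each statement's English description precedes it below -/
import Mathlib

section
/- For fixed b with 0 < b < 1/4, the integral over nonnegative x_1,...,x_5 of max(b x_1 + b x_2 + b x_4 + b x_5, b x_2 + (1-4b) x_3 + b x_5) · e^{-(x_1+x_2+x_3+x_4+x_5)} restricted to the region x_1 ≤ x_2 and x_4 ≤ x_5, multiplied by 4, equals 4(1-3b)(5b² - 5b + 1)/(7b - 2)². -/
/-!
Integrating first in `x₃`, for `C ≤ A` and `c > 0` one has
`∫₀^∞ max A (C + c x) e^{-x} dx = A + c e^{-(A - C)/c}`, which turns the integrand into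
`(b s + (1 - 4b) e^{-k (x₁ + x₄)}) e^{-s}` with `s = x₁ + x₂ + x₄ + x₅` and `k = b / (1 - 4b)`.
This is a sum of three products `f(x₁, x₂) g(x₄, x₅)`, so the remaining integral over the product
of the wedges `0 < x₁ ≤ x₂` and `0 < x₄ ≤ x₅` factors into elementary wedge integrals:
`∫∫ e^{-(d x + y)} = 1 / (1 + d)` and `∫∫ (x + y) e^{-(x + y)} = 1`.
The integral is therefore `b + (1 - 4b) / (2 + k)²`.
-/

open MeasureTheory Real Set Filter Topology

noncomputable def expAffineTail (a q d x : ℝ) : ℝ := ((a + q * x) / d + q / d ^ 2) * exp (-(d * x))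

section AffineExp

variable {a q d : ℝ}

lemma hasDerivAt_neg_expAffineTail (hd : d ≠ 0) (x : ℝ) :
    HasDerivAt (fun x => -expAffineTail a q d x) ((a + q * x) * exp (-(d * x))) x := by
  have hexp : HasDerivAt (fun x => exp (-(d * x))) (-d * exp (-(d * x))) x := by
    simpa [mul_comm] using ((hasDerivAt_id x).const_mul d).neg.exp
  have hlin : HasDerivAt (fun x => (a + q * x) / d + q / d ^ 2) (q / d) x := by
    simpa using ((((hasDerivAt_id x).const_mul q).const_add a).div_const d).add_const (q / d ^ 2)
  refine (hlin.mul hexp).neg.congr_deriv ?_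
  field_simp
  ring

lemma tendsto_affine_mul_exp_neg_atTop (hd : 0 < d) :
    Tendsto (fun x => (a + q * x) * exp (-(d * x))) atTop (𝓝 0) := by
  have hdx : Tendsto (fun x => d * x) atTop atTop := tendsto_id.const_mul_atTop hd
  have hexp : Tendsto (fun x => exp (-(d * x))) atTop (𝓝 0) :=
    tendsto_exp_neg_atTop_nhds_zero.comp hdx
  have hmul : Tendsto (fun x => d * x * exp (-(d * x))) atTop (𝓝 0) := by
    simpa [Function.comp_def] using (tendsto_pow_mul_exp_neg_atTop_nhds_zero 1).comp hdx
  convert (hexp.const_mul a).add (hmul.const_mul (q / d)) using 1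
  · ext x
    field_simp
  · simp

lemma tendsto_expAffineTail_atTop (hd : 0 < d) :
    Tendsto (expAffineTail a q d) atTop (𝓝 0) := by
  convert tendsto_affine_mul_exp_neg_atTop (a := a / d + q / d ^ 2) (q := q / d) hd using 2 with x
  simp only [expAffineTail]
  ring

lemma integrableOn_affine_mul_exp_neg (hd : 0 < d) (t : ℝ) :
    IntegrableOn (fun x => (a + q * x) * exp (-(d * x))) (Ioi t) := by
  refine integrable_of_isBigO_exp_neg (half_pos hd) (by fun_prop) ?_
  have hbdd := (tendsto_affine_mul_exp_neg_atTop (a := a) (q := q) (half_pos hd)).isBigO_one ℝ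
  refine (hbdd.mul (Asymptotics.isBigO_refl (fun x => exp (-(d / 2) * x)) atTop)).congr
    (fun x => ?_) (fun x => one_mul _)
  rw [mul_assoc, ← exp_add]
  ring_nf

lemma integral_Ioi_affine_mul_exp_neg (hd : 0 < d) (t : ℝ) :
    ∫ x in Ioi t, (a + q * x) * exp (-(d * x)) = expAffineTail a q d t := by
  simpa using integral_Ioi_of_hasDerivAt_of_tendsto'
    (fun x _ => hasDerivAt_neg_expAffineTail hd.ne' x)
    (integrableOn_affine_mul_exp_neg hd t) (tendsto_expAffineTail_atTop hd).neg

lemma integral_Ioc_affine_mul_exp_neg (hd : d ≠ 0) {s t : ℝ} (hst : s ≤ t) :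
    ∫ x in Ioc s t, (a + q * x) * exp (-(d * x)) =
      expAffineTail a q d s - expAffineTail a q d t := by
  rw [← intervalIntegral.integral_of_le hst,
    intervalIntegral.integral_eq_sub_of_hasDerivAt
      (fun x _ => hasDerivAt_neg_expAffineTail hd x)
      (Continuous.intervalIntegrable (by fun_prop) _ _)]
  ring

end AffineExp

lemma integral_Ioi_max_mul_exp_neg {A C c : ℝ} (hc : 0 < c) (hCA : C ≤ A) :
    ∫ x in Ioi 0, max A (C + c * x) * exp (-x) = A + c * exp (-((A - C) / c)) := by
  set t := (A - C) / c with ht_def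
  have ht : 0 ≤ t := div_nonneg (sub_nonneg.2 hCA) hc.le
  have hA : A = C + c * t := by rw [ht_def, mul_div_cancel₀ _ hc.ne']; ring
  have hlow : ∫ x in Ioc 0 t, max A (C + c * x) * exp (-x) =
      ∫ x in Ioc 0 t, (A + 0 * x) * exp (-(1 * x)) :=
    setIntegral_congr_fun measurableSet_Ioc fun x hx => by
      rw [max_eq_left (by nlinarith [hx.2])]
      simp
  have hhigh : ∫ x in Ioi t, max A (C + c * x) * exp (-x) =
      ∫ x in Ioi t, (C + c * x) * exp (-(1 * x)) :=
    setIntegral_congr_fun measurableSet_Ioi fun x hx => by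
      rw [max_eq_right (by nlinarith [hx.out])]
      simp
  have hint_low : IntegrableOn (fun x => max A (C + c * x) * exp (-x)) (Ioc 0 t) :=
    Continuous.integrableOn_Ioc (by fun_prop)
  have hint_high : IntegrableOn (fun x => max A (C + c * x) * exp (-x)) (Ioi t) := by
    refine (integrableOn_affine_mul_exp_neg (a := C) (q := c) one_pos t).congr_fun
      (fun x hx => ?_) measurableSet_Ioi
    rw [max_eq_right (by nlinarith [hx.out])]
    simp
  rw [← Ioc_union_Ioi_eq_Ioi ht, setIntegral_union (Ioc_disjoint_Ioi le_rfl) measurableSet_Ioi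
    hint_low hint_high, hlow, hhigh, integral_Ioc_affine_mul_exp_neg one_ne_zero ht,
    integral_Ioi_affine_mul_exp_neg one_pos]
  simp only [expAffineTail, ← hA, zero_mul, mul_zero, add_zero, div_one, one_pow,
    one_mul, neg_zero, exp_zero]
  ring

noncomputable def wedgeSlice (F : ℝ → ℝ → ℝ) (y : ℝ) : ℝ := ∫ x in Ioc 0 y, F x y

noncomputable def wedgeIntegral (F : ℝ → ℝ → ℝ) : ℝ := ∫ y in Ioi 0, wedgeSlice F y

noncomputable def wedgeProdIntegral (f : ℝ → ℝ → ℝ → ℝ → ℝ) : ℝ :=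
  ∫ y in Ioi 0, ∫ v in Ioi 0, ∫ x in Ioc 0 y, ∫ u in Ioc 0 v, f x y u v

lemma wedgeProdIntegral_congr {f g : ℝ → ℝ → ℝ → ℝ → ℝ}
    (h : ∀ x y u v, 0 < x → x ≤ y → 0 < u → u ≤ v → f x y u v = g x y u v) :
    wedgeProdIntegral f = wedgeProdIntegral g := by
  refine setIntegral_congr_fun measurableSet_Ioi fun y _ => ?_
  refine setIntegral_congr_fun measurableSet_Ioi fun v _ => ?_
  refine setIntegral_congr_fun measurableSet_Ioc fun x hx => ?_
  exact setIntegral_congr_fun measurableSet_Ioc fun u hu => h x y u v hx.1 hx.2 hu.1 hu.2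

lemma wedgeProdIntegral_sum_mul {ι : Type*} (s : Finset ι) (w : ι → ℝ) (F G : ι → ℝ → ℝ → ℝ)
    (hF : ∀ i y, Continuous fun x => F i x y) (hG : ∀ i v, Continuous fun u => G i u v)
    (hFint : ∀ i, IntegrableOn (wedgeSlice (F i)) (Ioi 0))
    (hGint : ∀ i, IntegrableOn (wedgeSlice (G i)) (Ioi 0)) :
    wedgeProdIntegral (fun x y u v => ∑ i ∈ s, w i * (F i x y * G i u v)) =
      ∑ i ∈ s, w i * (wedgeIntegral (F i) * wedgeIntegral (G i)) := by
  have hu : ∀ x y v, ∫ u in Ioc 0 v, ∑ i ∈ s, w i * (F i x y * G i u v) =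
      ∑ i ∈ s, w i * (F i x y * wedgeSlice (G i) v) := fun x y v => by
    rw [integral_finsetSum _ fun i _ => (by fun_prop : Continuous _).integrableOn_Ioc]
    simp only [wedgeSlice, integral_const_mul]
  have hx : ∀ y v, ∫ x in Ioc 0 y, ∑ i ∈ s, w i * (F i x y * wedgeSlice (G i) v) =
      ∑ i ∈ s, w i * (wedgeSlice (F i) y * wedgeSlice (G i) v) := fun y v => by
    rw [integral_finsetSum _ fun i _ => (by fun_prop : Continuous _).integrableOn_Ioc]
    simp only [wedgeSlice, integral_const_mul, integral_mul_const]
  have hv : ∀ y, ∫ v in Ioi 0, ∑ i ∈ s, w i * (wedgeSlice (F i) y * wedgeSlice (G i) v) =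
      ∑ i ∈ s, w i * (wedgeSlice (F i) y * wedgeIntegral (G i)) := fun y => by
    rw [integral_finsetSum _ fun i _ => ((hGint i).const_mul _).const_mul _]
    simp only [wedgeIntegral, integral_const_mul]
  rw [wedgeProdIntegral]
  simp only [hu, hx, hv]
  rw [integral_finsetSum _ fun i _ => ((hFint i).mul_const _).const_mul _]
  simp only [wedgeIntegral, integral_const_mul, integral_mul_const]

section WedgeValues

variable {d y : ℝ}

lemma wedgeSlice_exp_neg (hd : d ≠ 0) (hy : 0 ≤ y) :
    wedgeSlice (fun x y => exp (-(d * x + y))) y = (exp (-y) - exp (-((1 + d) * y))) / d := by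
  calc ∫ x in Ioc 0 y, exp (-(d * x + y))
      = ∫ x in Ioc 0 y, (exp (-y) + 0 * x) * exp (-(d * x)) :=
        setIntegral_congr_fun measurableSet_Ioc fun x _ => by
          rw [zero_mul, add_zero, ← exp_add, neg_add, add_comm]
    _ = _ := by
      rw [integral_Ioc_affine_mul_exp_neg hd hy, show -((1 + d) * y) = -y + -(d * y) by ring,
        exp_add]
      simp only [expAffineTail, mul_zero, neg_zero, exp_zero]
      field_simp
      ring

lemma wedgeSlice_add_mul_exp_neg (hy : 0 ≤ y) :
    wedgeSlice (fun x y => (x + y) * exp (-(x + y))) y =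
      (1 + y) * exp (-y) - (1 + 2 * y) * exp (-(2 * y)) := by
  calc ∫ x in Ioc 0 y, (x + y) * exp (-(x + y))
      = ∫ x in Ioc 0 y, (y * exp (-y) + exp (-y) * x) * exp (-(1 * x)) :=
        setIntegral_congr_fun measurableSet_Ioc fun x _ => by
          rw [neg_add, exp_add, one_mul]
          ring
    _ = _ := by
      rw [integral_Ioc_affine_mul_exp_neg one_ne_zero hy, show -(2 * y) = -y + -(1 * y) by ring,
        exp_add]
      simp only [expAffineTail, one_mul, mul_zero, add_zero, div_one, one_pow, neg_zero, exp_zero]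
      ring

lemma integrableOn_exp_neg_mul (hd : 0 < d) (t : ℝ) :
    IntegrableOn (fun x => exp (-(d * x))) (Ioi t) := by
  simpa only [neg_mul] using exp_neg_integrableOn_Ioi t hd

lemma integral_Ioi_zero_exp_neg_mul (hd : 0 < d) :
    ∫ x in Ioi 0, exp (-(d * x)) = 1 / d := by
  simpa [expAffineTail] using integral_Ioi_affine_mul_exp_neg (a := 1) (q := 0) hd 0

lemma integrableOn_wedgeSlice_exp_neg (hd : 0 < d) :
    IntegrableOn (wedgeSlice fun x y => exp (-(d * x + y))) (Ioi 0) := by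
  refine IntegrableOn.congr_fun (((integrableOn_exp_neg_Ioi 0).sub
    (integrableOn_exp_neg_mul (by linarith : 0 < 1 + d) 0)).div_const d) (fun y hy => ?_)
    measurableSet_Ioi
  simp only [wedgeSlice_exp_neg hd.ne' hy.out.le, Pi.sub_apply]

lemma wedgeIntegral_exp_neg (hd : 0 < d) :
    wedgeIntegral (fun x y => exp (-(d * x + y))) = 1 / (1 + d) := by
  rw [wedgeIntegral, setIntegral_congr_fun measurableSet_Ioi
    fun y hy => wedgeSlice_exp_neg hd.ne' hy.out.le, integral_div,
    integral_sub (integrableOn_exp_neg_Ioi 0) (integrableOn_exp_neg_mul (by linarith) 0),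
    integral_exp_neg_Ioi_zero, integral_Ioi_zero_exp_neg_mul (by linarith)]
  field_simp
  ring

lemma integrableOn_wedgeSlice_add_mul_exp_neg :
    IntegrableOn (wedgeSlice fun x y => (x + y) * exp (-(x + y))) (Ioi 0) := by
  have h1 := integrableOn_affine_mul_exp_neg (a := 1) (q := 1) one_pos 0
  simp only [one_mul] at h1
  refine (h1.sub (integrableOn_affine_mul_exp_neg (a := 1) (q := 2) two_pos 0)).congr_fun
    (fun y hy => ?_) measurableSet_Ioi
  simp only [wedgeSlice_add_mul_exp_neg hy.out.le, Pi.sub_apply]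

lemma wedgeIntegral_add_mul_exp_neg :
    wedgeIntegral (fun x y => (x + y) * exp (-(x + y))) = 1 := by
  have h1 := integrableOn_affine_mul_exp_neg (a := 1) (q := 1) one_pos 0
  have e1 := integral_Ioi_affine_mul_exp_neg (a := 1) (q := 1) one_pos 0
  simp only [one_mul] at h1 e1
  rw [wedgeIntegral, setIntegral_congr_fun measurableSet_Ioi
    fun y hy => wedgeSlice_add_mul_exp_neg hy.out.le, integral_sub h1
    (integrableOn_affine_mul_exp_neg two_pos 0), e1, integral_Ioi_affine_mul_exp_neg two_pos]
  simp only [expAffineTail]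
  norm_num

end WedgeValues

lemma integral_Ioi_max_mul_exp_neg_sum {b x₁ x₂ x₄ x₅ : ℝ} (hb : 0 ≤ b) (hb' : b < 1 / 4)
    (hx₁ : 0 ≤ x₁) (hx₄ : 0 ≤ x₄) :
    ∫ x₃ in Ioi 0, max (b * x₁ + b * x₂ + b * x₄ + b * x₅) (b * x₂ + (1 - 4 * b) * x₃ + b * x₅) *
        exp (-(x₁ + x₂ + x₃ + x₄ + x₅)) =
      (b * (x₁ + x₂ + x₄ + x₅) + (1 - 4 * b) * exp (-(b / (1 - 4 * b) * (x₁ + x₄)))) *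
        exp (-(x₁ + x₂ + x₄ + x₅)) := by
  have hc : 0 < 1 - 4 * b := by linarith
  have hsplit : ∀ x₃, max (b * x₁ + b * x₂ + b * x₄ + b * x₅) (b * x₂ + (1 - 4 * b) * x₃ + b * x₅) *
      exp (-(x₁ + x₂ + x₃ + x₄ + x₅)) =
      max (b * x₁ + b * x₂ + b * x₄ + b * x₅) ((b * x₂ + b * x₅) + (1 - 4 * b) * x₃) * exp (-x₃) *
        exp (-(x₁ + x₂ + x₄ + x₅)) := fun x₃ => by
    rw [mul_assoc, ← exp_add, add_right_comm (b * x₂)]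
    ring_nf
  simp only [hsplit]
  rw [integral_mul_const, integral_Ioi_max_mul_exp_neg hc (by nlinarith),
    show (b * x₁ + b * x₂ + b * x₄ + b * x₅ - (b * x₂ + b * x₅)) / (1 - 4 * b) =
      b / (1 - 4 * b) * (x₁ + x₄) by ring]
  ring

lemma wedgeProdIntegral_affine_add_exp_mul_exp_neg (β c : ℝ) {k : ℝ} (hk : 0 < k) :
    wedgeProdIntegral (fun x y u v =>
      (β * (x + y + u + v) + c * exp (-(k * (x + u)))) * exp (-(x + y + u + v))) =
      β + c / (2 + k) ^ 2 := by
  let E : ℝ → ℝ → ℝ → ℝ := fun d x y => exp (-(d * x + y))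
  let L : ℝ → ℝ → ℝ := fun x y => (x + y) * exp (-(x + y))
  let w : Fin 3 → ℝ := ![β, β, c]
  let F : Fin 3 → ℝ → ℝ → ℝ := ![L, E 1, E (1 + k)]
  let G : Fin 3 → ℝ → ℝ → ℝ := ![E 1, L, E (1 + k)]
  have hsplit : ∀ x y u v,
      (β * (x + y + u + v) + c * exp (-(k * (x + u)))) * exp (-(x + y + u + v)) =
        ∑ i, w i * (F i x y * G i u v) := fun x y u v => by
    simp only [Fin.sum_univ_three, w, F, G, E, L, Matrix.cons_val_zero, Matrix.cons_val_one,
      Matrix.cons_val_two, Matrix.head_cons, Matrix.tail_cons]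
    simp only [neg_add, exp_add, add_mul, mul_add, one_mul]
    ring
  have hLc : ∀ y, Continuous fun x => L x y := fun y => by fun_prop
  have hEc : ∀ d y, Continuous fun x => E d x y := fun d y => by fun_prop
  have hL := integrableOn_wedgeSlice_add_mul_exp_neg
  have hE₁ := integrableOn_wedgeSlice_exp_neg one_pos
  have hEk := integrableOn_wedgeSlice_exp_neg (by linarith : 0 < 1 + k)
  simp only [hsplit]
  rw [wedgeProdIntegral_sum_mul _ w F G
    (fun i y => by fin_cases i; exacts [hLc y, hEc 1 y, hEc _ y])
    (fun i y => by fin_cases i; exacts [hEc 1 y, hLc y, hEc _ y])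
    (fun i => by fin_cases i; exacts [hL, hE₁, hEk])
    (fun i => by fin_cases i; exacts [hE₁, hL, hEk])]
  simp only [Fin.sum_univ_three, w, F, G, E, L, Matrix.cons_val_zero, Matrix.cons_val_one,
    Matrix.cons_val_two, Matrix.head_cons, Matrix.tail_cons, wedgeIntegral_exp_neg one_pos,
    wedgeIntegral_exp_neg (by linarith : 0 < 1 + k), wedgeIntegral_add_mul_exp_neg]
  field_simp
  ring

theorem stmt_9 (b : ℝ) (hb0 : 0 < b) (hb1 : b < 1 / 4) :
    4 * ∫ x2 in Set.Ioi (0 : ℝ), ∫ x5 in Set.Ioi (0 : ℝ),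
        ∫ x1 in Set.Ioc (0 : ℝ) x2, ∫ x4 in Set.Ioc (0 : ℝ) x5,
        ∫ x3 in Set.Ioi (0 : ℝ),
          max (b * x1 + b * x2 + b * x4 + b * x5)
              (b * x2 + (1 - 4 * b) * x3 + b * x5) *
            Real.exp (-(x1 + x2 + x3 + x4 + x5)) =
      4 * (1 - 3 * b) * (5 * b ^ 2 - 5 * b + 1) / (7 * b - 2) ^ 2 := by
  change 4 * wedgeProdIntegral _ = _
  rw [wedgeProdIntegral_congr fun x₁ x₂ x₄ x₅ hx₁ _ hx₄ _ =>
      integral_Ioi_max_mul_exp_neg_sum hb0.le hb1 hx₁.le hx₄.le,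
    wedgeProdIntegral_affine_add_exp_mul_exp_neg _ _ (div_pos hb0 (by linarith))]
  -- `field` looks for nonvanishing denominators only after normalising `4 * b` to `b * 4`.
  have hc : 1 - b * 4 ≠ 0 := by linarith
  have h : 2 - b * 7 ≠ 0 := by linarith
  have h' : b * 7 - 2 ≠ 0 := by linarith
  rw [show 2 + b / (1 - 4 * b) = (2 - 7 * b) / (1 - 4 * b) by field]
  field
end

section
/- The polynomial 1452b⁵ - 3993b⁴ + 2765b³ - 804b² + 105b - 5 has a unique zero b in the open interval (0, 1/5). -/
/-!
Every zero of `p(b) = 1452b⁵ - 3993b⁴ + 2765b³ - 804b² + 105b - 5` in `(0, 1/5)` lies in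
`[0.11, 0.12]`, since `p < 0` on `(0, 0.11)` and `p > 0` on `(0.12, 1/5)`. On `[0.11, 0.12]` the
derivative is positive and `p` changes sign, so there is exactly one zero there.
-/

open Set

theorem existsUnique_zero_of_strictMonoOn {f : ℝ → ℝ} {l a b r : ℝ} (hla : l ≤ a) (hbr : b ≤ r)
    (hab : a ≤ b) (hcont : ContinuousOn f (Icc a b)) (hmono : StrictMonoOn f (Icc a b))
    (ha : f a < 0) (hb : 0 < f b)
    (hneg : ∀ x ∈ Ioo l a, f x < 0) (hpos : ∀ x ∈ Ioo b r, 0 < f x) :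
    ∃! x, x ∈ Ioo l r ∧ f x = 0 := by
  obtain ⟨c, hc, hfc⟩ := intermediate_value_Ioo hab hcont ⟨ha, hb⟩
  refine ⟨c, ⟨⟨hla.trans_lt hc.1, hc.2.trans_le hbr⟩, hfc⟩, fun y ⟨hy, hfy⟩ => ?_⟩
  have hya : a ≤ y := not_lt.mp fun h => (hneg y ⟨hy.1, h⟩).ne hfy
  have hyb : y ≤ b := not_lt.mp fun h => (hpos y ⟨h, hy.2⟩).ne' hfy
  exact hmono.injOn ⟨hya, hyb⟩ (Ioo_subset_Icc_self hc) (hfy.trans hfc.symm)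

noncomputable def quintic (x : ℝ) : ℝ :=
  1452 * x ^ 5 - 3993 * x ^ 4 + 2765 * x ^ 3 - 804 * x ^ 2 + 105 * x - 5

theorem hasDerivAt_quintic (x : ℝ) :
    HasDerivAt quintic (7260 * x ^ 4 - 15972 * x ^ 3 + 8295 * x ^ 2 - 1608 * x + 105) x := by
  have := ((((((hasDerivAt_pow 5 x).const_mul (1452 : ℝ)).sub
    ((hasDerivAt_pow 4 x).const_mul (3993 : ℝ))).add
    ((hasDerivAt_pow 3 x).const_mul (2765 : ℝ))).sub
    ((hasDerivAt_pow 2 x).const_mul (804 : ℝ))).add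
    ((hasDerivAt_id x).const_mul (105 : ℝ))).sub (hasDerivAt_const x (5 : ℝ))
  exact this.congr_deriv (by norm_num; ring)

theorem strictMonoOn_quintic : StrictMonoOn quintic (Icc 0.11 0.12) := by
  refine strictMonoOn_of_hasDerivWithinAt_pos (convex_Icc _ _)
    (fun x _ => (hasDerivAt_quintic x).continuousAt.continuousWithinAt)
    (fun x _ => (hasDerivAt_quintic x).hasDerivWithinAt) fun x hx => ?_
  rw [interior_Icc] at hx
  nlinarith [hx.1, hx.2, mul_pos (sub_pos.2 hx.1) (sub_pos.2 hx.2)]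

theorem quintic_neg {x : ℝ} (h0 : 0 < x) (h : x < 0.11) : quintic x < 0 := by
  unfold quintic
  nlinarith [sq_nonneg x, sq_nonneg (x - 0.11), mul_pos h0 h0, sq_nonneg (x ^ 2 - 0.01),
    mul_pos (mul_pos h0 h0) h0]

theorem quintic_pos {x : ℝ} (h : 0.12 < x) (h1 : x < 1 / 5) : 0 < quintic x := by
  unfold quintic
  have hp : (0 : ℝ) < x - 0.12 := by linarith
  have hq : (0 : ℝ) < 1 / 5 - x := by linarith
  nlinarith [mul_pos hp hq, mul_pos (mul_pos hp hp) hq, mul_pos hp (mul_pos hq hq),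
    mul_pos (mul_pos hp hp) (mul_pos hq hq), mul_pos (mul_pos hp hp) hp]

theorem stmt_11 :
    ∃! b : ℝ, b ∈ Set.Ioo (0 : ℝ) (1 / 5) ∧
      1452 * b ^ 5 - 3993 * b ^ 4 + 2765 * b ^ 3 - 804 * b ^ 2 + 105 * b - 5 = 0 :=
  existsUnique_zero_of_strictMonoOn (f := quintic) (by norm_num) (by norm_num) (by norm_num)
    (fun x _ => (hasDerivAt_quintic x).continuousAt.continuousWithinAt) strictMonoOn_quintic
    (by norm_num [quintic]) (by norm_num [quintic])
    (fun _ hx => quintic_neg hx.1 hx.2) (fun _ hx => quintic_pos hx.1 hx.2)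
end

section
/- The polynomial 2372895b⁶ - 3013200b⁵ + 1501416b⁴ - 389232b³ + 56016b² - 4224b + 128 has a unique zero b in (0, 1/6), and for this b, E = -2(-128 + 2448b - 17856b² + 60372b³ - 88938b⁴ + 37665b⁵) / (9(32 - 600b + 4212b² - 13122b³ + 15309b⁴)) satisfies 0.8696 < E < 0.8697. -/
/-!
The sextic `P` has derivative negative on `[0, 0.11]` and `P` itself is negative on
`[0.11, 1/6]`, so its zeros in `(0, 1/6)` lie in the range where it is strictly decreasing:
there is at most one. As `P 0.0884 > 0 > P 0.0886`, the intermediate value theorem gives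
one, and monotonicity traps every zero in `(0.0884, 0.0886)`. On that interval the
denominator of `E` is positive and `E` stays within `(0.8696, 0.8697)`.
-/

namespace SexticRoot

def P (b : ℝ) : ℝ :=
  2372895 * b ^ 6 - 3013200 * b ^ 5 + 1501416 * b ^ 4 - 389232 * b ^ 3 +
    56016 * b ^ 2 - 4224 * b + 128

noncomputable def E (b : ℝ) : ℝ :=
  -2 * (-128 + 2448 * b - 17856 * b ^ 2 + 60372 * b ^ 3 - 88938 * b ^ 4 + 37665 * b ^ 5) /
    (9 * (32 - 600 * b + 4212 * b ^ 2 - 13122 * b ^ 3 + 15309 * b ^ 4))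

lemma continuous_P : Continuous P := by
  unfold P; fun_prop

lemma hasDerivAt_P (x : ℝ) : HasDerivAt P
    (14237370 * x ^ 5 - 15066000 * x ^ 4 + 6005664 * x ^ 3 - 1167696 * x ^ 2 +
      112032 * x - 4224) x := by
  refine ((((((((hasDerivAt_pow 6 x).const_mul 2372895).fun_sub
    ((hasDerivAt_pow 5 x).const_mul 3013200)).fun_add
    ((hasDerivAt_pow 4 x).const_mul 1501416)).fun_sub
    ((hasDerivAt_pow 3 x).const_mul 389232)).fun_add
    ((hasDerivAt_pow 2 x).const_mul 56016)).fun_sub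
    ((hasDerivAt_id' x).const_mul 4224)).add_const 128).congr_deriv ?_
  norm_num
  ring

lemma strictAntiOn_P : StrictAntiOn P (Set.Icc 0 (11 / 100)) := by
  refine strictAntiOn_of_deriv_neg (convex_Icc _ _) continuous_P.continuousOn fun x hx => ?_
  rw [interior_Icc] at hx
  obtain ⟨hx0, hx1⟩ := hx
  rw [(hasDerivAt_P x).deriv]
  nlinarith [pow_pos hx0 2, pow_pos hx0 3, pow_pos hx0 4,
    mul_nonneg (pow_pos hx0 2).le (sq_nonneg (x - 11 / 100))]

lemma P_neg_of_mem_Icc {b : ℝ} (h1 : 11 / 100 ≤ b) (h2 : b ≤ 1 / 6) : P b < 0 := by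
  have h12 := mul_nonneg (sub_nonneg.2 h1) (sub_nonneg.2 h2)
  unfold P
  nlinarith [sq_nonneg (b - 11 / 100), sq_nonneg (b - 1 / 6), sq_nonneg b,
    mul_nonneg h12 (sq_nonneg b), mul_nonneg h12 (sub_nonneg.2 h1)]

lemma mem_Icc_of_P_eq_zero {b : ℝ} (hb : b ∈ Set.Ioo (0 : ℝ) (1 / 6)) (hP : P b = 0) :
    b ∈ Set.Icc 0 (11 / 100) :=
  ⟨hb.1.le, not_lt.1 fun h => (P_neg_of_mem_Icc h.le hb.2.le).ne hP⟩

lemma P_0884_pos : 0 < P (884 / 10000) := by norm_num [P]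

lemma P_0886_neg : P (886 / 10000) < 0 := by norm_num [P]

lemma mem_Ioo_of_P_eq_zero {b : ℝ} (hb : b ∈ Set.Ioo (0 : ℝ) (1 / 6)) (hP : P b = 0) :
    b ∈ Set.Ioo (884 / 10000) (886 / 10000) := by
  have hb' := mem_Icc_of_P_eq_zero hb hP
  constructor
  · exact (strictAntiOn_P.lt_iff_gt hb' (by norm_num)).1 (hP ▸ P_0884_pos)
  · exact (strictAntiOn_P.lt_iff_gt (by norm_num) hb').1 (hP ▸ P_0886_neg)

lemma existsUnique_P_eq_zero : ∃! b ∈ Set.Ioo (0 : ℝ) (1 / 6), P b = 0 := by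
  obtain ⟨b, hb, hP⟩ := intermediate_value_Ioo' (by norm_num) continuous_P.continuousOn
    ⟨P_0886_neg, P_0884_pos⟩
  have hb₀ : b ∈ Set.Ioo (0 : ℝ) (1 / 6) := ⟨by linarith [hb.1], by linarith [hb.2]⟩
  refine ⟨b, ⟨hb₀, hP⟩, fun c ⟨hc, hPc⟩ => ?_⟩
  exact strictAntiOn_P.injOn (mem_Icc_of_P_eq_zero hc hPc) (mem_Icc_of_P_eq_zero hb₀ hP)
    (hPc.trans hP.symm)

lemma E_mem_Ioo {b : ℝ} (hb : b ∈ Set.Ioo (884 / 10000 : ℝ) (886 / 10000)) :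
    E b ∈ Set.Ioo 0.8696 0.8697 := by
  obtain ⟨h1, h2⟩ := hb
  have h12 := mul_pos (sub_pos.2 h1) (sub_pos.2 h2)
  have hD : 0 < 9 * (32 - 600 * b + 4212 * b ^ 2 - 13122 * b ^ 3 + 15309 * b ^ 4) := by
    nlinarith [sq_nonneg b, sq_nonneg (b - 884 / 10000)]
  unfold E
  constructor
  · rw [lt_div_iff₀ hD]
    norm_num
    nlinarith [sq_nonneg (b - 884 / 10000), sq_nonneg (b - 886 / 10000),
      mul_nonneg h12.le (sq_nonneg b)]
  · rw [div_lt_iff₀ hD]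
    norm_num
    nlinarith [sq_nonneg (b - 884 / 10000), sq_nonneg (b - 886 / 10000),
      mul_nonneg h12.le (sq_nonneg b)]

end SexticRoot

open SexticRoot in
theorem stmt_14 :
    (∃! b : ℝ, b ∈ Set.Ioo (0 : ℝ) (1 / 6) ∧
      2372895 * b ^ 6 - 3013200 * b ^ 5 + 1501416 * b ^ 4 - 389232 * b ^ 3 +
        56016 * b ^ 2 - 4224 * b + 128 = 0) ∧
    ∀ b : ℝ, b ∈ Set.Ioo (0 : ℝ) (1 / 6) →
      2372895 * b ^ 6 - 3013200 * b ^ 5 + 1501416 * b ^ 4 - 389232 * b ^ 3 +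
        56016 * b ^ 2 - 4224 * b + 128 = 0 →
      0.8696 < -2 * (-128 + 2448 * b - 17856 * b ^ 2 + 60372 * b ^ 3 -
            88938 * b ^ 4 + 37665 * b ^ 5) /
          (9 * (32 - 600 * b + 4212 * b ^ 2 - 13122 * b ^ 3 + 15309 * b ^ 4)) ∧
        -2 * (-128 + 2448 * b - 17856 * b ^ 2 + 60372 * b ^ 3 -
            88938 * b ^ 4 + 37665 * b ^ 5) /
          (9 * (32 - 600 * b + 4212 * b ^ 2 - 13122 * b ^ 3 + 15309 * b ^ 4)) < 0.8697 :=
  ⟨existsUnique_P_eq_zero, fun _ hb hP => E_mem_Ioo (mem_Ioo_of_P_eq_zero hb hP)⟩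
end

section
/- Let G be a graph on n̄ vertices with M̄ edges satisfying M̄ ≤ n̄/2 - s for some s > 0 and n̄ ≥ 4. If G is chosen uniformly at random among all graphs with n̄ vertices and M̄ edges, then the expected number of vertices lying on cycles is at most (1/2)·(n̄-3)/s. -/
/-!
Double counting. A vertex `v` on a cycle of `G`, together with one of the two orientations of a
chosen cycle through `v`, gives a rooted oriented cycle of the complete graph, of some length
`3 ≤ k ≤ M`, all of whose edges lie in `G`; this assignment is injective. There are at most
`n (n - 1) ⋯ (n - k + 1)` rooted oriented `k`-cycles, and each lies in `C(N - k, M - k)` of the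
`C(N, M)` graphs with `M` edges, where `N = C(n, 2)`. Term by term this is at most `y ^ k C(N, M)`
with `y = 2M / (n - 1) < 1`, so twice the expected number of vertices on cycles is bounded by a
geometric sum, which is at most `2 (n - 3) / (n - 2M) ≤ (n - 3) / s`.
-/

open scoped Classical

open Finset

lemma descFactorial_mul_choose_sub_le {n m k : ℕ} (hmn : 2 * m < n) (hkm : k ≤ m) :
    (n.descFactorial k : ℝ) * ((n.choose 2 - k).choose (m - k) : ℕ) ≤
      (2 * m / (n - 1 : ℝ)) ^ k * ((n.choose 2).choose m : ℕ) := by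
  induction k with
  | zero => simp
  | succ k ih =>
    set N := n.choose 2
    have hN : (N : ℝ) = n * (n - 1) / 2 := Nat.cast_choose_two ℝ n
    have hnm : (2 * m + 1 : ℝ) ≤ n := by exact_mod_cast hmn
    have hkm' : (k + 1 : ℝ) ≤ m := by exact_mod_cast hkm
    have hk0 : (0 : ℝ) ≤ k := k.cast_nonneg
    have hNk : (0 : ℝ) < N - k := by rw [hN]; nlinarith
    have hkN : k < N := by exact_mod_cast sub_pos.mp hNk
    have hchoose : ((N : ℝ) - k) * ((N - (k + 1)).choose (m - (k + 1)) : ℕ) =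
        ((N - k).choose (m - k) : ℕ) * ((m : ℝ) - k) := by
      have h := Nat.add_one_mul_choose_eq (N - (k + 1)) (m - (k + 1))
      rw [show N - (k + 1) + 1 = N - k by omega, show m - (k + 1) + 1 = m - k by omega] at h
      rw [← Nat.cast_sub hkN.le, ← Nat.cast_sub (by omega : k ≤ m)]
      exact_mod_cast h
    have hdesc : (n.descFactorial (k + 1) : ℝ) = (n - k) * n.descFactorial k := by
      rw [Nat.descFactorial_succ, Nat.cast_mul, Nat.cast_sub (by omega)]
    -- `2m (N - k) - (n - k)(m - k)(n - 1) = k ((n - 1)(n + m - k) - 2m)` since `2N = n (n - 1)`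
    have hfactor : ((n : ℝ) - k) * (m - k) ≤ 2 * m / (n - 1) * (N - k) := by
      rw [div_mul_eq_mul_div, le_div_iff₀ (by linarith), hN]
      nlinarith [mul_nonneg hk0 (by nlinarith : (0 : ℝ) ≤ (n - 1) * (n + m - k) - 2 * m)]
    refine le_of_mul_le_mul_right ?_ hNk
    calc (n.descFactorial (k + 1) : ℝ) * ((N - (k + 1)).choose (m - (k + 1)) : ℕ) * (N - k)
        = ((n - k) * (m - k)) * (n.descFactorial k * ((N - k).choose (m - k) : ℕ)) := by
          rw [hdesc]; linear_combination ((n : ℝ) - k) * n.descFactorial k * hchoose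
      _ ≤ (2 * m / (n - 1) * (N - k)) * ((2 * m / (n - 1 : ℝ)) ^ k * (N.choose m : ℕ)) :=
          mul_le_mul hfactor (ih (by omega)) (by positivity) (by nlinarith)
      _ = (2 * m / (n - 1 : ℝ)) ^ (k + 1) * (N.choose m : ℕ) * (N - k) := by ring

lemma sum_Icc_geom_le {n m : ℕ} (hn : 4 ≤ n) (hmn : 2 * m < n) :
    ∑ k ∈ Icc 3 m, (2 * m / (n - 1 : ℝ)) ^ k ≤ 2 * (n - 3) / (n - 2 * m) := by
  have hnm : (2 * m + 1 : ℝ) ≤ n := by exact_mod_cast hmn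
  have hn4 : (4 : ℝ) ≤ n := by exact_mod_cast hn
  set y := 2 * m / (n - 1 : ℝ)
  have hn1 : (0 : ℝ) < n - 1 := by linarith
  have hy0 : 0 ≤ y := div_nonneg (by positivity) hn1.le
  rcases le_or_gt (n - 2 * m) 2 with hd | hd
  · have hd' : (n : ℝ) ≤ 2 * m + 2 := by exact_mod_cast (by omega : n ≤ 2 * m + 2)
    have hy1 : y ≤ 1 := by rw [div_le_one hn1]; linarith
    calc ∑ k ∈ Icc 3 m, y ^ k ≤ ∑ _k ∈ Icc 3 m, (1 : ℝ) :=
          sum_le_sum fun k _ => pow_le_one₀ hy0 hy1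
      _ = ((m + 1 - 3 : ℕ) : ℝ) := by rw [sum_const, Nat.card_Icc, nsmul_one]
      _ ≤ ((n - 3 : ℕ) : ℝ) := by exact_mod_cast (by omega : m + 1 - 3 ≤ n - 3)
      _ = n - 3 := by rw [Nat.cast_sub (by omega)]; norm_num
      _ ≤ 2 * (n - 3) / (n - 2 * m) := by rw [le_div_iff₀ (by linarith)]; nlinarith
  · have hd' : (2 * m + 3 : ℝ) ≤ n := by exact_mod_cast (by omega : 2 * m + 3 ≤ n)
    have hy1 : y < 1 := by rw [div_lt_one hn1]; linarith
    calc ∑ k ∈ Icc 3 m, y ^ k = ∑ k ∈ Ico 3 (m + 1), y ^ k := by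
          rw [Ico_add_one_right_eq_Icc]
      _ ≤ y ^ 3 / (1 - y) := geom_sum_Ico_le_of_lt_one hy0 hy1
      _ ≤ y / (1 - y) :=
          div_le_div_of_nonneg_right (pow_le_of_le_one hy0 hy1.le (by norm_num)) (by linarith)
      _ = 2 * m / (n - 1 - 2 * m) := by
          rw [div_eq_div_iff (by linarith) (by linarith)]
          unfold y
          field_simp
      _ ≤ 2 * (n - 3) / (n - 2 * m) := by
          rw [div_le_div_iff₀ (by linarith) (by linarith)]
          nlinarith [mul_nonneg m.cast_nonneg (by linarith : (0 : ℝ) ≤ n - 2 * m - 3)]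

namespace SimpleGraph

section Walks

variable {V : Type*} {G : SimpleGraph V} {u v : V}

lemma Walk.toFinset_edges_subset_edgeFinset [DecidableEq V] [Fintype G.edgeSet]
    (p : G.Walk u v) : p.edges.toFinset ⊆ G.edgeFinset := fun _ he =>
  mem_edgeFinset.mpr (p.edges_subset_edgeSet (List.mem_toFinset.mp he))

lemma Walk.IsTrail.card_toFinset_edges [DecidableEq V] {p : G.Walk u v} (hp : p.IsTrail) :
    #p.edges.toFinset = p.length := by
  rw [List.toFinset_card_of_nodup hp.edges_nodup, Walk.length_edges]

noncomputable def orientedCycleAt (G : SimpleGraph V) (v : V) (b : Bool) :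
    (⊤ : SimpleGraph V).Walk v v :=
  if h : ∃ c : G.Walk v v, c.IsCycle then
    (if b then h.choose else h.choose.reverse).mapLe le_top
  else Walk.nil

lemma orientedCycleAt_injective (h : ∃ c : G.Walk v v, c.IsCycle) :
    Function.Injective (orientedCycleAt G v) := by
  have hsnd : (h.choose.mapLe le_top).snd ≠ (h.choose.reverse.mapLe le_top).snd := by
    simp only [Walk.snd, Walk.getVert_map, Hom.coe_ofLE, id]
    rw [← Walk.snd, ← Walk.snd, Walk.snd_reverse]
    exact h.choose_spec.snd_ne_penultimate
  intro b b' hbb'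
  simp only [orientedCycleAt, dif_pos h] at hbb'
  cases b <;> cases b'
  · rfl
  · exact absurd (congrArg Walk.snd hbb').symm hsnd
  · exact absurd (congrArg Walk.snd hbb') hsnd
  · rfl

end Walks

variable {V : Type*} [Fintype V] [DecidableEq V]

noncomputable def rootedCycles (V : Type*) [Fintype V] [DecidableEq V] (k : ℕ) :
    Finset (Σ v : V, (⊤ : SimpleGraph V).Walk v v) :=
  univ.sigma fun v => ((⊤ : SimpleGraph V).finsetWalkLength k v v).filter Walk.IsCycle

@[simp]
lemma mem_rootedCycles {k : ℕ} {v : V} {p : (⊤ : SimpleGraph V).Walk v v} :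
    ⟨v, p⟩ ∈ rootedCycles V k ↔ p.IsCycle ∧ p.length = k := by
  simp [rootedCycles, mem_finsetWalkLength_iff, and_comm]

lemma card_rootedCycles_le (k : ℕ) :
    #(rootedCycles V k) ≤ (Fintype.card V).descFactorial k := by
  have hinj : #(univ.filter fun f : Fin k → V => f.Injective) =
      (Fintype.card V).descFactorial k := by
    rw [← Fintype.card_subtype, Fintype.card_congr (Equiv.subtypeInjectiveEquivEmbedding _ _),
      Fintype.card_embedding_eq, Fintype.card_fin]
  rw [← hinj]
  refine card_le_card_of_injOn (fun γ i => γ.2.getVert i) ?_ ?_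
  · rintro ⟨v, p⟩ hp
    obtain ⟨hc, rfl⟩ := mem_rootedCycles.mp hp
    simp only [coe_filter, mem_univ, true_and, Set.mem_ofPred_eq]
    intro i j hij
    exact Fin.ext (hc.getVert_injOn' (by simp only [Set.mem_ofPred_eq]; omega)
      (by simp only [Set.mem_ofPred_eq]; omega) hij)
  · rintro ⟨v, p⟩ hp ⟨w, q⟩ hq hpq
    obtain ⟨hc, rfl⟩ := mem_rootedCycles.mp hp
    obtain ⟨-, hl⟩ := mem_rootedCycles.mp hq
    have hvw : v = w := by
      simpa using congrFun hpq ⟨0, by have := hc.three_le_length; omega⟩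
    subst hvw
    refine Sigma.ext rfl (heq_of_eq (Walk.ext_getVert_le_length hl.symm fun i hi => ?_))
    rcases hi.lt_or_eq with hi | rfl
    · exact congrFun hpq ⟨i, hi⟩
    · rw [Walk.getVert_length, ← hl, Walk.getVert_length]

noncomputable def graphsWithEdgeCount (V : Type*) [Fintype V] [DecidableEq V] (m : ℕ) :
    Finset (SimpleGraph V) :=
  univ.filter fun G => G.edgeSet.ncard = m

lemma mem_graphsWithEdgeCount {m : ℕ} {G : SimpleGraph V} :
    G ∈ graphsWithEdgeCount V m ↔ #G.edgeFinset = m := by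
  rw [graphsWithEdgeCount, mem_filter, Set.ncard_eq_toFinset_card', edgeFinset]
  simp

lemma image_edgeFinset_graphsWithEdgeCount (m : ℕ) :
    (graphsWithEdgeCount V m).image (fun G => G.edgeFinset) =
      powersetCard m (⊤ : SimpleGraph V).edgeFinset := by
  ext A
  simp only [mem_image, mem_graphsWithEdgeCount, mem_powersetCard]
  constructor
  · rintro ⟨G, hG, rfl⟩
    exact ⟨edgeFinset_mono le_top, hG⟩
  · rintro ⟨hA, rfl⟩
    have hedges : (fromEdgeSet (A : Set (Sym2 V))).edgeFinset = A := by
      ext e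
      simp only [mem_edgeFinset, edgeSet_fromEdgeSet, Set.mem_sdiff, mem_coe,
        and_iff_left_iff_imp]
      intro he
      simpa using hA he
    exact ⟨fromEdgeSet A, by convert congrArg card hedges, by convert hedges⟩

lemma card_graphsWithEdgeCount (m : ℕ) :
    #(graphsWithEdgeCount V m) = ((Fintype.card V).choose 2).choose m := by
  rw [← card_edgeFinset_top_eq_card_choose_two, ← card_powersetCard,
    ← image_edgeFinset_graphsWithEdgeCount,
    card_image_of_injective _ fun _ _ => edgeFinset_inj.mp]

lemma card_filter_subset_edgeFinset {m : ℕ} {E : Finset (Sym2 V)}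
    (hE : E ⊆ (⊤ : SimpleGraph V).edgeFinset) (hEm : #E ≤ m) :
    #((graphsWithEdgeCount V m).filter fun G => E ⊆ G.edgeFinset) =
      ((Fintype.card V).choose 2 - #E).choose (m - #E) := by
  rw [← card_edgeFinset_top_eq_card_choose_two, ← card_filter_powersetCard_subset _ _ _ hE hEm,
    ← image_edgeFinset_graphsWithEdgeCount, filter_image,
    card_image_of_injective _ fun _ _ => edgeFinset_inj.mp]

noncomputable def cycleGraphPairs (V : Type*) [Fintype V] [DecidableEq V] (m k : ℕ) :
    Finset (Σ _ : (Σ v : V, (⊤ : SimpleGraph V).Walk v v), SimpleGraph V) :=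
  (rootedCycles V k).sigma fun γ =>
    (graphsWithEdgeCount V m).filter fun G => γ.2.edges.toFinset ⊆ G.edgeFinset

lemma card_cycleGraphPairs_le {m k : ℕ} (hkm : k ≤ m) :
    #(cycleGraphPairs V m k) ≤
      (Fintype.card V).descFactorial k * ((Fintype.card V).choose 2 - k).choose (m - k) := by
  rw [cycleGraphPairs, card_sigma]
  calc ∑ γ ∈ rootedCycles V k, #((graphsWithEdgeCount V m).filter fun G =>
          γ.2.edges.toFinset ⊆ G.edgeFinset)
      = ∑ _γ ∈ rootedCycles V k, ((Fintype.card V).choose 2 - k).choose (m - k) := by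
        refine sum_congr rfl fun ⟨v, p⟩ hp => ?_
        obtain ⟨hc, rfl⟩ := mem_rootedCycles.mp hp
        have hcard := hc.isTrail.card_toFinset_edges
        rw [card_filter_subset_edgeFinset p.toFinset_edges_subset_edgeFinset (hcard ▸ hkm), hcard]
    _ ≤ _ := by
        rw [sum_const, smul_eq_mul]
        exact Nat.mul_le_mul_right _ (card_rootedCycles_le k)

lemma mk_orientedCycleAt_mem_cycleGraphPairs {m : ℕ} {G : SimpleGraph V} {v : V}
    (hG : G ∈ graphsWithEdgeCount V m) (h : ∃ c : G.Walk v v, c.IsCycle) (b : Bool) :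
    ⟨⟨v, orientedCycleAt G v b⟩, G⟩ ∈ (Icc 3 m).biUnion (cycleGraphPairs V m) := by
  set p := if b then h.choose else h.choose.reverse
  have hp : p.IsCycle := by cases b <;> simp [p, h.choose_spec, h.choose_spec.reverse]
  rw [mem_graphsWithEdgeCount] at hG
  rw [orientedCycleAt, dif_pos h, mem_biUnion]
  refine ⟨p.length,
    mem_Icc.mpr ⟨hp.three_le_length, hG ▸ hp.isTrail.length_le_card_edgeFinset⟩, ?_⟩
  rw [cycleGraphPairs, mem_sigma, mem_rootedCycles, mem_filter, mem_graphsWithEdgeCount,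
    Walk.edges_mapLe_eq_edges, Walk.length_mapLe]
  exact ⟨⟨hp.mapLe le_top, rfl⟩, hG, p.toFinset_edges_subset_edgeFinset⟩

lemma two_mul_sum_card_cycleVerts_le (m : ℕ) :
    2 * ∑ G ∈ graphsWithEdgeCount V m, #(univ.filter fun v => ∃ c : G.Walk v v, c.IsCycle) ≤
      ∑ k ∈ Icc 3 m,
        (Fintype.card V).descFactorial k * ((Fintype.card V).choose 2 - k).choose (m - k) := by
  calc 2 * ∑ G ∈ graphsWithEdgeCount V m, #(univ.filter fun v => ∃ c : G.Walk v v, c.IsCycle)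
      = #(((graphsWithEdgeCount V m).sigma fun G =>
          univ.filter fun v => ∃ c : G.Walk v v, c.IsCycle) ×ˢ (univ : Finset Bool)) := by
        rw [card_product, card_sigma, card_univ, Fintype.card_bool, mul_comm]
    _ ≤ #((Icc 3 m).biUnion (cycleGraphPairs V m)) := by
        refine card_le_card_of_injOn
          (fun p => ⟨⟨p.1.2, orientedCycleAt p.1.1 p.1.2 p.2⟩, p.1.1⟩) ?_ ?_
        · rintro ⟨⟨G, v⟩, b⟩ hp
          simp only [coe_product, Set.mem_prod, mem_coe, mem_sigma, mem_filter] at hp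
          exact mk_orientedCycleAt_mem_cycleGraphPairs hp.1.1 hp.1.2.2 b
        · rintro ⟨⟨G, v⟩, b⟩ hp ⟨⟨G', v'⟩, b'⟩ - heq
          simp only [coe_product, Set.mem_prod, mem_coe, mem_sigma, mem_filter] at hp
          simp only [Sigma.mk.injEq, heq_eq_eq] at heq
          obtain ⟨⟨rfl, hbb'⟩, rfl⟩ := heq
          rw [orientedCycleAt_injective hp.1.2.2 (eq_of_heq hbb')]
    _ ≤ ∑ k ∈ Icc 3 m, #(cycleGraphPairs V m k) := card_biUnion_le
    _ ≤ _ := sum_le_sum fun k hk => card_cycleGraphPairs_le (mem_Icc.mp hk).2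

lemma sum_card_cycleVerts_le {m : ℕ} (hn : 4 ≤ Fintype.card V) (hm : 2 * m < Fintype.card V) :
    ∑ G ∈ graphsWithEdgeCount V m,
        (#(univ.filter fun v => ∃ c : G.Walk v v, c.IsCycle) : ℝ) ≤
      (Fintype.card V - 3) / (Fintype.card V - 2 * m) * #(graphsWithEdgeCount V m) := by
  rw [card_graphsWithEdgeCount]
  set n := Fintype.card V
  have h2 : 2 * ∑ G ∈ graphsWithEdgeCount V m,
      (#(univ.filter fun v => ∃ c : G.Walk v v, c.IsCycle) : ℝ) ≤
        2 * ((n - 3) / (n - 2 * m)) * ((n.choose 2).choose m : ℕ) :=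
    calc _ ≤ ∑ k ∈ Icc 3 m,
          (n.descFactorial k : ℝ) * ((n.choose 2 - k).choose (m - k) : ℕ) := by
          exact_mod_cast two_mul_sum_card_cycleVerts_le m
      _ ≤ ∑ k ∈ Icc 3 m, (2 * m / (n - 1 : ℝ)) ^ k * ((n.choose 2).choose m : ℕ) :=
          sum_le_sum fun k hk => descFactorial_mul_choose_sub_le hm (mem_Icc.mp hk).2
      _ ≤ 2 * ((n - 3) / (n - 2 * m)) * ((n.choose 2).choose m : ℕ) := by
          rw [← sum_mul, ← mul_div_assoc]
          exact mul_le_mul_of_nonneg_right (sum_Icc_geom_le hn hm) (Nat.cast_nonneg _)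
  linarith

end SimpleGraph

theorem stmt_17 (n M : ℕ) (s : ℝ) (hs : 0 < s) (hn : 4 ≤ n)
    (hM : (M : ℝ) ≤ (n : ℝ) / 2 - s) :
    (∑ G ∈ Finset.univ.filter
        (fun G : SimpleGraph (Fin n) => G.edgeSet.ncard = M),
        (({v : Fin n | ∃ c : G.Walk v v, c.IsCycle}).ncard : ℝ)) /
      ((Finset.univ.filter
        (fun G : SimpleGraph (Fin n) => G.edgeSet.ncard = M)).card : ℝ)
      ≤ (1 / 2) * ((n : ℝ) - 3) / s := by
  have hn' : (4 : ℝ) ≤ n := by exact_mod_cast hn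
  have hmn : 2 * M < n := by
    have : (2 * M : ℝ) < n := by linarith
    exact_mod_cast this
  have hbound := SimpleGraph.sum_card_cycleVerts_le (V := Fin n) (m := M)
    (by rwa [Fintype.card_fin]) (by rwa [Fintype.card_fin])
  simp only [Fintype.card_fin, SimpleGraph.graphsWithEdgeCount] at hbound
  have hncard (G : SimpleGraph (Fin n)) : {v : Fin n | ∃ c : G.Walk v v, c.IsCycle}.ncard =
      #(univ.filter fun v => ∃ c : G.Walk v v, c.IsCycle) := by
    rw [Set.ncard_eq_toFinset_card', Set.toFinset_ofPred]
  simp only [hncard]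
  refine div_le_of_le_mul₀ (Nat.cast_nonneg _) (div_nonneg (by linarith) hs.le)
    (hbound.trans (mul_le_mul_of_nonneg_right ?_ (Nat.cast_nonneg _)))
  calc ((n : ℝ) - 3) / (n - 2 * M) ≤ (n - 3) / (2 * s) :=
        div_le_div_of_nonneg_left (by linarith) (by positivity) (by linarith)
    _ = 1 / 2 * (n - 3) / s := by field_simp
end
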